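/- Let θ be an absolute norm on ℝ^K that is (κ̄,ς̄)-regular, and let ‖·‖ᵢ be (κ',ς')-regular norms on ℝ^{nᵢ}, i = 1,…,K. Then the norm ‖(x₁,…,x_K)‖ = θ(‖x₁‖₁², …, ‖x_K‖_K²)^{1/2} on ℝ^{n₁+…+n_K} is (κ,ς)-regular with κ = 2κ̄ + κ' and ς = ς'·√ς̄. -/

import Mathlib

open scoped RealInnerProductSpace
open Real Matrix

/-- `N` is a norm on the real vector space `E`. -/
def IsNorm {E : Type*} [AddCommGroup E] [Module ℝ E] (N : E → ℝ) : Prop :=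
  (∀ x, 0 ≤ N x) ∧ (∀ x, N x = 0 ↔ x = 0) ∧
    (∀ (c : ℝ) (x), N (c • x) = |c| * N x) ∧ ∀ x y, N (x + y) ≤ N x + N y

/-- The conjugate (dual) norm of `N`: `‖y‖_* = sup {⟨y,x⟩ : N x ≤ 1}`. -/
noncomputable def dualNorm {E : Type*} [NormedAddCommGroup E] [InnerProductSpace ℝ E]
    (N : E → ℝ) (y : E) : ℝ :=
  sSup {r | ∃ x, N x ≤ 1 ∧ r = ⟪y, x⟫}

/-- `N` is a `κ`-smooth norm: its square `Φ` is `C¹` and satisfies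
`Φ(x+h) ≤ Φ(x) + ⟨∇Φ(x),h⟩ + κ Φ(h)`. -/
def IsSmoothNorm {E : Type*} [NormedAddCommGroup E] [InnerProductSpace ℝ E] [CompleteSpace E]
    (κ : ℝ) (N : E → ℝ) : Prop :=
  IsNorm N ∧ ContDiff ℝ 1 (fun x => N x ^ 2) ∧
    ∀ x h, N (x + h) ^ 2 ≤
      N x ^ 2 + ⟪gradient (fun z => N z ^ 2) x, h⟫ + κ * N h ^ 2

/-- `N` is a `(κ,ς)`-regular norm: within factor `ς` of a `κ`-smooth norm. -/
def IsRegularNorm {E : Type*} [NormedAddCommGroup E] [InnerProductSpace ℝ E] [CompleteSpace E]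
    (κ ς : ℝ) (N : E → ℝ) : Prop :=
  ∃ M : E → ℝ, IsSmoothNorm κ M ∧ ∀ x, ς⁻¹ * M x ≤ N x ∧ N x ≤ ς * M x

/-!
Replace the smooth proxy `θ̃` of `θ` by its average over sign changes, `ψ(t)² = avg_ε θ̃(εt)²`.
As a quadratic mean of `κ̄`-smooth norms it is `κ̄`-smooth, it is absolute, and since `θ` is
sign-invariant it is still within `ς̄` of `θ`. Absolute norms are monotone in `(|tᵢ|)ᵢ`; this gives
the comparison of the two aggregates (factor `ς'√ς̄`) and the smoothness of
`M(x) = ψ(u(x))^{1/2}`, `u(x) = (Mᵢ(xᵢ)²)ᵢ`. With `ℓ = (D(Mᵢ²)(xᵢ)hᵢ)ᵢ`, monotonicity and the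
smoothness of the `Mᵢ` give `ψ(u(x+h)) ≤ ψ(u(x) + ℓ) + κ' ψ(u(h))`; smoothness of `ψ` bounds
`ψ(u(x) + ℓ)²`, and the Cauchy–Schwarz inequality `ψ(ℓ)² ≤ 4 ψ(u(x)) ψ(u(h))` for absolute norms
turns its remainder `κ̄ ψ(ℓ)²` into `2κ̄ ψ(u(h))` after taking the square root. Finally `M²` is
`C¹` away from `0` by the chain rule, and at `0` because it is `O(‖x‖²)` with derivative `O(‖x‖)`.
-/

theorem two_mul_le_mul_sq_add_inv_mul_sq {a b r : ℝ} (hr : 0 < r) :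
    2 * a * b ≤ r * a ^ 2 + r⁻¹ * b ^ 2 := by
  have h := mul_nonneg (inv_pos.2 hr).le (sq_nonneg (r * a - b))
  have hr' : r⁻¹ * r = 1 := inv_mul_cancel₀ hr.ne'
  nlinarith

theorem sq_le_four_mul_of_forall_le_mul_add {p V s : ℝ} (hp : 0 ≤ p) (hV : 0 < V) (hs : 0 ≤ s)
    (h : ∀ r, 0 < r → p ≤ r * V + r⁻¹ * s) : p ^ 2 ≤ 4 * V * s := by
  rcases hp.eq_or_lt with rfl | hp
  · rw [zero_pow two_ne_zero]
    positivity
  have := h (p / (2 * V)) (by positivity)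
  rw [inv_div] at this
  field_simp at this
  nlinarith

theorem sqrt_sum_mul_sq_le {J : Type*} [Fintype J] {w f : J → ℝ} {m : ℝ} (hw : ∀ j, 0 ≤ w j)
    (hw1 : ∑ j, w j = 1) (hm : 0 ≤ m) (hf : ∀ j, |f j| ≤ m) : √(∑ j, w j * f j ^ 2) ≤ m := by
  refine Real.sqrt_le_iff.2 ⟨hm, ?_⟩
  calc ∑ j, w j * f j ^ 2 ≤ ∑ j, w j * m ^ 2 :=
        Finset.sum_le_sum fun j _ => mul_le_mul_of_nonneg_left (sq_le_sq' (abs_le.1 (hf j)).1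
          (abs_le.1 (hf j)).2) (hw j)
    _ = m ^ 2 := by rw [← Finset.sum_mul, hw1, one_mul]

theorem le_sqrt_sum_mul_sq {J : Type*} [Fintype J] {w f : J → ℝ} {m : ℝ} (hw : ∀ j, 0 ≤ w j)
    (hw1 : ∑ j, w j = 1) (hm : 0 ≤ m) (hf : ∀ j, m ≤ f j) : m ≤ √(∑ j, w j * f j ^ 2) := by
  refine Real.le_sqrt_of_sq_le ?_
  calc m ^ 2 = ∑ j, w j * m ^ 2 := by rw [← Finset.sum_mul, hw1, one_mul]
    _ ≤ ∑ j, w j * f j ^ 2 := by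
        gcongr with j
        · exact hw j
        · exact hf j

theorem sum_inv_card_eq_one {J : Type*} [Fintype J] [Nonempty J] :
    ∑ _j : J, (Fintype.card J : ℝ)⁻¹ = 1 := by
  rw [Finset.sum_const, Finset.card_univ, nsmul_eq_mul,
    mul_inv_cancel₀ (Nat.cast_ne_zero.2 Fintype.card_ne_zero)]

-- The square-root step of the aggregate estimate, with `W = ψ(u + ℓ)`, `V = ψ(u)`,
-- `A = Dψ(u) ℓ`, `p = ψ(ℓ)` and `s = ψ(u(h))`.
theorem le_add_add_mul_of_sq_le {W V A p s κ : ℝ} (hW : 0 ≤ W) (hV : 0 ≤ V) (hs : 0 ≤ s)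
    (hκ : 1 ≤ κ) (hA : |A| ≤ p) (hp : p ^ 2 ≤ 4 * V * s)
    (hW2 : W ^ 2 ≤ V ^ 2 + 2 * V * A + κ * p ^ 2) : W ≤ V + A + 2 * κ * s := by
  have hp0 : 0 ≤ p := (abs_nonneg A).trans hA
  have hpVs : p ≤ V + s :=
    (pow_le_pow_iff_left₀ hp0 (add_nonneg hV hs) two_ne_zero).1 (by nlinarith [sq_nonneg (V - s)])
  have hR : 0 ≤ V + A + 2 * κ * s := by nlinarith [(abs_le.1 hA).1]
  refine (pow_le_pow_iff_left₀ hW hR two_ne_zero).1 ?_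
  nlinarith [sq_nonneg (A + 2 * κ * s)]

namespace IsNorm

section Module

variable {E : Type*} [AddCommGroup E] [Module ℝ E] {N : E → ℝ}

theorem nonneg (hN : IsNorm N) (x : E) : 0 ≤ N x := hN.1 x

theorem eq_zero_iff (hN : IsNorm N) {x : E} : N x = 0 ↔ x = 0 := hN.2.1 x

theorem map_smul (hN : IsNorm N) (c : ℝ) (x : E) : N (c • x) = |c| * N x := hN.2.2.1 c x

theorem add_le (hN : IsNorm N) (x y : E) : N (x + y) ≤ N x + N y := hN.2.2.2 x y

theorem map_zero (hN : IsNorm N) : N 0 = 0 := hN.eq_zero_iff.2 rfl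

theorem map_neg (hN : IsNorm N) (x : E) : N (-x) = N x := by
  simpa using hN.map_smul (-1) x

theorem map_smul_of_nonneg (hN : IsNorm N) {c : ℝ} (hc : 0 ≤ c) (x : E) : N (c • x) = c * N x := by
  rw [hN.map_smul, abs_of_nonneg hc]

theorem map_sum_le (hN : IsNorm N) {J : Type*} (s : Finset J) (f : J → E) :
    N (∑ j ∈ s, f j) ≤ ∑ j ∈ s, N (f j) := by
  classical
  induction s using Finset.induction_on with
  | empty => simp [hN.map_zero]
  | insert j s hj ih =>
    rw [Finset.sum_insert hj, Finset.sum_insert hj]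
    exact (hN.add_le _ _).trans (by linarith)

theorem le_max_of_mem_segment (hN : IsNorm N) {x y z : E} (hz : z ∈ segment ℝ x y) :
    N z ≤ max (N x) (N y) := by
  obtain ⟨a, b, ha, hb, hab, rfl⟩ := hz
  calc N (a • x + b • y) ≤ a * N x + b * N y :=
        (hN.add_le _ _).trans_eq (by rw [hN.map_smul_of_nonneg ha, hN.map_smul_of_nonneg hb])
    _ ≤ a * max (N x) (N y) + b * max (N x) (N y) := by
        gcongr
        exacts [le_max_left _ _, le_max_right _ _]
    _ = max (N x) (N y) := by rw [← add_mul, hab, one_mul]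

theorem comp_linearMap {F : Type*} [AddCommGroup F] [Module ℝ F] (hN : IsNorm N)
    (A : F →ₗ[ℝ] E) (hA : Function.Injective A) : IsNorm fun x => N (A x) :=
  ⟨fun x => hN.nonneg _, fun x => hN.eq_zero_iff.trans (map_eq_zero_iff A hA),
    fun c x => by simp only [LinearMap.map_smul, hN.map_smul],
    fun x y => by simpa only [LinearMap.map_add] using hN.add_le _ _⟩

theorem sqrt_sum_mul_sq {J : Type*} [Fintype J] [Nonempty J] {N : J → E → ℝ} {w : J → ℝ}
    (hN : ∀ j, IsNorm (N j)) (hw : ∀ j, 0 < w j) : IsNorm fun x => √(∑ j, w j * N j x ^ 2) := by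
  let e : E → EuclideanSpace ℝ J := fun x => WithLp.toLp 2 fun j => √(w j) * N j x
  have he : ∀ x, √(∑ j, w j * N j x ^ 2) = ‖e x‖ := fun x => by
    rw [EuclideanSpace.norm_eq]
    congr 1
    refine Finset.sum_congr rfl fun j _ => ?_
    rw [Real.norm_eq_abs, sq_abs, mul_pow, Real.sq_sqrt (hw j).le]
  refine ⟨fun x => Real.sqrt_nonneg _, fun x => ?_, fun c x => ?_, fun x y => ?_⟩
  · rw [Real.sqrt_eq_zero (Finset.sum_nonneg fun j _ => (mul_nonneg (hw j).le (sq_nonneg _))),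
      Finset.sum_eq_zero_iff_of_nonneg fun j _ => (mul_nonneg (hw j).le (sq_nonneg _))]
    constructor
    · intro h
      obtain ⟨j⟩ := ‹Nonempty J›
      simpa [(hw j).ne', (hN j).eq_zero_iff] using h j (Finset.mem_univ j)
    · rintro rfl j -
      simp [(hN j).map_zero]
  · have : ∑ j, w j * N j (c • x) ^ 2 = c ^ 2 * ∑ j, w j * N j x ^ 2 := by
      rw [Finset.mul_sum]
      refine Finset.sum_congr rfl fun j _ => ?_
      rw [(hN j).map_smul, mul_pow, sq_abs]
      ring
    dsimp only
    rw [this, Real.sqrt_mul (sq_nonneg c), Real.sqrt_sq_eq_abs]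
  · dsimp only
    rw [he, he, he]
    refine le_trans ?_ (norm_add_le (e x) (e y))
    rw [EuclideanSpace.norm_eq, EuclideanSpace.norm_eq]
    gcongr with j
    simp only [e, PiLp.add_apply, ← mul_add, Real.norm_eq_abs, abs_mul]
    gcongr
    exacts [(hN j).nonneg _, (hN j).add_le x y]

end Module

section Normed

variable {E : Type*} [NormedAddCommGroup E] [NormedSpace ℝ E] {N : E → ℝ}

theorem fderiv_apply_le (hN : IsNorm N) {u : E} (hd : DifferentiableAt ℝ N u) (y : E) :
    fderiv ℝ N u y ≤ N y := by
  refine le_of_tendsto (hd.hasFDerivAt.hasLineDerivAt y).tendsto_slope_zero_right ?_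
  filter_upwards [self_mem_nhdsWithin] with t (ht : 0 < t)
  rw [smul_eq_mul, inv_mul_le_iff₀ ht, ← hN.map_smul_of_nonneg ht.le]
  linarith [hN.add_le u (t • y)]

theorem abs_fderiv_apply_le (hN : IsNorm N) {u : E} (hd : DifferentiableAt ℝ N u) (y : E) :
    |fderiv ℝ N u y| ≤ N y := by
  refine abs_le.2 ⟨?_, hN.fderiv_apply_le hd y⟩
  have := hN.fderiv_apply_le hd (-y)
  rw [_root_.map_neg, hN.map_neg] at this
  linarith

theorem hasFDerivAt_of_sq (hN : IsNorm N) {u : E} {L : E →L[ℝ] ℝ}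
    (hL : HasFDerivAt (fun x => N x ^ 2) L u) (hu : u ≠ 0) :
    HasFDerivAt N ((2 * N u)⁻¹ • L) u := by
  have hsqrt : (fun x => √(N x ^ 2)) = N := funext fun x => Real.sqrt_sq (hN.nonneg x)
  have hpos : N u ^ 2 ≠ 0 := pow_ne_zero 2 (mt hN.eq_zero_iff.1 hu)
  simpa [hsqrt, Real.sqrt_sq (hN.nonneg u)] using hL.sqrt hpos

theorem contDiffAt_of_sq (hN : IsNorm N) {u : E} (hC : ContDiffAt ℝ 1 (fun x => N x ^ 2) u)
    (hu : u ≠ 0) : ContDiffAt ℝ 1 N u := by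
  have hsqrt : (fun x => √(N x ^ 2)) = N := funext fun x => Real.sqrt_sq (hN.nonneg x)
  rw [← hsqrt]
  exact hC.sqrt (pow_ne_zero 2 (mt hN.eq_zero_iff.1 hu))

theorem fderiv_sq_zero (hN : IsNorm N) : fderiv ℝ (fun x => N x ^ 2) 0 = 0 :=
  IsLocalMin.fderiv_eq_zero <| Filter.Eventually.of_forall fun x => by
    simpa [hN.map_zero] using sq_nonneg (N x)

theorem abs_fderiv_sq_apply_le (hN : IsNorm N) (u y : E) :
    |fderiv ℝ (fun x => N x ^ 2) u y| ≤ 2 * N u * N y := by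
  by_cases hu : u = 0
  · subst hu
    simp [hN.fderiv_sq_zero, hN.map_zero]
  by_cases hd : DifferentiableAt ℝ (fun x => N x ^ 2) u
  · have hNd := hN.hasFDerivAt_of_sq hd.hasFDerivAt hu
    have hpos : 0 < 2 * N u := by
      have := (hN.nonneg u).lt_of_ne' (mt hN.eq_zero_iff.1 hu)
      positivity
    have := hN.abs_fderiv_apply_le hNd.differentiableAt y
    rw [hNd.fderiv, _root_.smul_apply, smul_eq_mul, abs_mul,
      abs_of_pos (inv_pos.2 hpos), inv_mul_le_iff₀ hpos] at this
    linarith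
  · rw [fderiv_zero_of_not_differentiableAt hd]
    simp only [_root_.zero_apply, abs_zero]
    have := hN.nonneg u
    have := hN.nonneg y
    positivity

theorem exists_le_mul_norm [FiniteDimensional ℝ E] (hN : IsNorm N) :
    ∃ C, 0 ≤ C ∧ ∀ x, N x ≤ C * ‖x‖ := by
  let b := Module.finBasis ℝ E
  refine ⟨(∑ i, N (b i)) * ‖b.equivFunL.toContinuousLinearMap‖,
    mul_nonneg (Finset.sum_nonneg fun i _ => hN.nonneg (b i)) (norm_nonneg _), fun x => ?_⟩
  have hcoord : ∀ i, |b.equivFunL x i| ≤ ‖b.equivFunL.toContinuousLinearMap‖ * ‖x‖ :=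
    fun i => (norm_le_pi_norm (b.equivFunL x) i).trans
      (b.equivFunL.toContinuousLinearMap.le_opNorm x)
  calc N x = N (∑ i, b.equivFunL x i • b i) := by simp [b.sum_repr]
    _ ≤ ∑ i, |b.equivFunL x i| * N (b i) := by
        simpa only [hN.map_smul] using hN.map_sum_le Finset.univ fun i => b.equivFunL x i • b i
    _ ≤ ∑ i, ‖b.equivFunL.toContinuousLinearMap‖ * ‖x‖ * N (b i) := by
        gcongr with i
        · exact hN.nonneg _
        · exact hcoord i
    _ = _ := by rw [← Finset.mul_sum]; ring

theorem contDiff_sq_of_contDiffOn_compl_zero [FiniteDimensional ℝ E] (hN : IsNorm N)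
    (hC : ContDiffOn ℝ 1 (fun x => N x ^ 2) {0}ᶜ) : ContDiff ℝ 1 (fun x => N x ^ 2) := by
  obtain ⟨C, hC0, hNC⟩ := hN.exists_le_mul_norm
  have hopen : IsOpen ({0}ᶜ : Set E) := isOpen_compl_singleton
  have hzero : HasFDerivAt (fun x => N x ^ 2) (0 : E →L[ℝ] ℝ) 0 := by
    rw [hasFDerivAt_iff_isLittleO_nhds_zero]
    refine (Asymptotics.IsBigO.of_bound (C ^ 2) (Filter.Eventually.of_forall fun h => ?_))
      |>.trans_isLittleO (Asymptotics.isLittleO_norm_pow_id one_lt_two)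
    simp only [zero_add, hN.map_zero, _root_.zero_apply, Real.norm_eq_abs, norm_pow, abs_norm]
    rw [zero_pow two_ne_zero, sub_zero, sub_zero, abs_of_nonneg (sq_nonneg _)]
    nlinarith [hNC h, hN.nonneg h]
  have hbound : ∀ x, ‖fderiv ℝ (fun x => N x ^ 2) x‖ ≤ 2 * C ^ 2 * ‖x‖ := fun x =>
    ContinuousLinearMap.opNorm_le_bound _ (by positivity) fun h => by
      rw [Real.norm_eq_abs]
      calc _ ≤ 2 * N x * N h := hN.abs_fderiv_sq_apply_le x h
        _ ≤ 2 * (C * ‖x‖) * (C * ‖h‖) := by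
          gcongr
          exacts [hN.nonneg h, hNC x, hNC h]
        _ = 2 * C ^ 2 * ‖x‖ * ‖h‖ := by ring
  have hdiff : Differentiable ℝ (fun x => N x ^ 2) := fun x => by
    by_cases hx : x = 0
    · exact hx ▸ hzero.differentiableAt
    · exact (hC.differentiableOn one_ne_zero).differentiableAt (hopen.mem_nhds hx)
  refine contDiff_one_iff_fderiv.2 ⟨hdiff, continuous_iff_continuousAt.2 fun x => ?_⟩
  by_cases hx : x = 0
  · subst hx
    rw [ContinuousAt, hzero.fderiv]
    refine squeeze_zero_norm hbound ?_
    simpa using (tendsto_norm_zero (E := E)).const_mul (2 * C ^ 2)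
  · exact (hC.continuousOn_fderiv_of_isOpen hopen le_rfl).continuousAt (hopen.mem_nhds hx)

end Normed

end IsNorm

section SmoothNorm

variable {E : Type*} [NormedAddCommGroup E] [InnerProductSpace ℝ E] [CompleteSpace E]
  {κ : ℝ} {N : E → ℝ}

theorem isSmoothNorm_iff_fderiv : IsSmoothNorm κ N ↔ IsNorm N ∧ ContDiff ℝ 1 (fun x => N x ^ 2) ∧
    ∀ x h, N (x + h) ^ 2 ≤ N x ^ 2 + fderiv ℝ (fun z => N z ^ 2) x h + κ * N h ^ 2 := by
  simp only [IsSmoothNorm, inner_gradient_left]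

namespace IsSmoothNorm

theorem isNorm (hN : IsSmoothNorm κ N) : IsNorm N := hN.1

theorem contDiff_sq (hN : IsSmoothNorm κ N) : ContDiff ℝ 1 (fun x => N x ^ 2) := hN.2.1

theorem sq_add_le (hN : IsSmoothNorm κ N) (x h : E) :
    N (x + h) ^ 2 ≤ N x ^ 2 + fderiv ℝ (fun z => N z ^ 2) x h + κ * N h ^ 2 :=
  (isSmoothNorm_iff_fderiv.1 hN).2.2 x h

theorem of_ne_zero (hN : IsNorm N) (hC : ContDiff ℝ 1 (fun x => N x ^ 2)) (hκ : 1 ≤ κ)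
    (hsq : ∀ x, x ≠ 0 → ∀ h,
      N (x + h) ^ 2 ≤ N x ^ 2 + fderiv ℝ (fun z => N z ^ 2) x h + κ * N h ^ 2) :
    IsSmoothNorm κ N := by
  refine isSmoothNorm_iff_fderiv.2 ⟨hN, hC, fun x h => ?_⟩
  rcases eq_or_ne x 0 with rfl | hx
  · rw [hN.fderiv_sq_zero, zero_add, hN.map_zero, _root_.zero_apply]
    nlinarith [sq_nonneg (N h)]
  · exact hsq x hx h

theorem comp_continuousLinearEquiv {F : Type*} [NormedAddCommGroup F] [InnerProductSpace ℝ F]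
    [CompleteSpace F] (hN : IsSmoothNorm κ N) (A : F ≃L[ℝ] E) :
    IsSmoothNorm κ fun x => N (A x) := by
  refine isSmoothNorm_iff_fderiv.2 ⟨hN.isNorm.comp_linearMap (A : F →ₗ[ℝ] E) A.injective,
    hN.contDiff_sq.comp A.contDiff, fun x h => ?_⟩
  have hD : fderiv ℝ (fun y => N (A y) ^ 2) x h = fderiv ℝ (fun z => N z ^ 2) (A x) (A h) := by
    rw [show (fun y => N (A y) ^ 2) = (fun z => N z ^ 2) ∘ A from rfl, A.comp_right_fderiv]
    rfl
  simpa only [hD, map_add] using hN.sq_add_le (A x) (A h)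

theorem sqrt_sum_mul_sq {J : Type*} [Fintype J] [Nonempty J] {N : J → E → ℝ} {w : J → ℝ}
    (hN : ∀ j, IsSmoothNorm κ (N j)) (hw : ∀ j, 0 < w j) :
    IsSmoothNorm κ fun x => √(∑ j, w j * N j x ^ 2) := by
  have hS : ∀ x, 0 ≤ ∑ j, w j * N j x ^ 2 := fun x =>
    Finset.sum_nonneg fun j _ => mul_nonneg (hw j).le (sq_nonneg _)
  have hsq : (fun x => √(∑ j, w j * N j x ^ 2) ^ 2) = fun x => ∑ j, w j * N j x ^ 2 :=
    funext fun x => Real.sq_sqrt (hS x)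
  have hD : ∀ x, HasFDerivAt (fun x => ∑ j, w j * N j x ^ 2)
      (∑ j, w j • fderiv ℝ (fun z => N j z ^ 2) x) x := fun x =>
    HasFDerivAt.fun_sum fun j _ =>
      (((hN j).contDiff_sq.differentiable one_ne_zero x).hasFDerivAt).const_mul (w j)
  refine isSmoothNorm_iff_fderiv.2 ⟨IsNorm.sqrt_sum_mul_sq (fun j => (hN j).isNorm) hw, ?_,
    fun x h => ?_⟩
  · rw [hsq]
    exact ContDiff.sum fun j _ => contDiff_const.mul (hN j).contDiff_sq
  · simp only [hsq, (hD x).fderiv, _root_.sum_apply, _root_.smul_apply, smul_eq_mul]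
    rw [Real.sq_sqrt (hS (x + h)), Real.sq_sqrt (hS x), Real.sq_sqrt (hS h), Finset.mul_sum,
      ← Finset.sum_add_distrib, ← Finset.sum_add_distrib]
    refine Finset.sum_le_sum fun j _ => ?_
    nlinarith [mul_le_mul_of_nonneg_left ((hN j).sq_add_le x h) (hw j).le]

end IsSmoothNorm

end SmoothNorm

section Absolute

variable {ι : Type*} {N : EuclideanSpace ℝ ι → ℝ}

def IsAbsolute (N : EuclideanSpace ℝ ι → ℝ) : Prop :=
  ∀ t : EuclideanSpace ℝ ι, N t = N (WithLp.toLp 2 fun i => |t i|)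

namespace IsAbsolute

theorem eq_of_abs_eq (habs : IsAbsolute N) {a b : EuclideanSpace ℝ ι}
    (h : ∀ i, |a i| = |b i|) : N a = N b := by
  rw [habs a, habs b]
  simp only [h]

theorem update_le [DecidableEq ι] (habs : IsAbsolute N) (hN : IsNorm N) (t : EuclideanSpace ℝ ι)
    (i : ι) {s : ℝ} (hs : |s| ≤ |t i|) :
    N (WithLp.toLp 2 (Function.update t.ofLp i s)) ≤ N t := by
  let f : ℝ → EuclideanSpace ℝ ι := fun r => WithLp.toLp 2 (Function.update t.ofLp i r)
  have hend : ∀ r, |r| = |t i| → N (f r) = N t := fun r hr => habs.eq_of_abs_eq fun j => by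
    rcases eq_or_ne j i with rfl | hj <;> simp [f, *]
  obtain ⟨α, β, hα, hβ, hαβ, rfl⟩ : s ∈ segment ℝ (-|t i|) |t i| := by
    rw [segment_eq_Icc (neg_le_self (abs_nonneg _))]
    exact abs_le.1 hs
  have hcomb : α • f (-|t i|) + β • f |t i| = f (α • -|t i| + β • |t i|) := by
    ext j
    rcases eq_or_ne j i with rfl | hj
    · simp [f]
    · simp [f, hj, ← add_mul, hαβ]
  calc N (f _) ≤ max (N (f (-|t i|))) (N (f |t i|)) :=
        hN.le_max_of_mem_segment ⟨α, β, hα, hβ, hαβ, hcomb⟩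
    _ = N t := by rw [hend _ (by rw [abs_neg, abs_abs]), hend _ (abs_abs _), max_self]

theorem mono [Fintype ι] (habs : IsAbsolute N) (hN : IsNorm N) {a b : EuclideanSpace ℝ ι}
    (h : ∀ i, |a i| ≤ b i) : N a ≤ N b := by
  classical
  have key : ∀ S : Finset ι, N (WithLp.toLp 2 (S.piecewise a.ofLp b.ofLp)) ≤ N b := by
    intro S
    induction S using Finset.induction_on with
    | empty => simp
    | insert j S hj ih =>
      rw [Finset.piecewise_insert]
      refine (habs.update_le hN _ j ?_).trans ih
      simpa [hj, abs_of_nonneg ((abs_nonneg _).trans (h j))] using h j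
  simpa using key Finset.univ

theorem sq_le_of_abs_le_two_mul [Fintype ι] (habs : IsAbsolute N) (hN : IsNorm N) {a b : ι → ℝ}
    {c : EuclideanSpace ℝ ι} (h : ∀ i, |c i| ≤ 2 * a i * b i) :
    N c ^ 2 ≤ 4 * N (WithLp.toLp 2 fun i => a i ^ 2) * N (WithLp.toLp 2 fun i => b i ^ 2) := by
  set A : EuclideanSpace ℝ ι := WithLp.toLp 2 fun i => a i ^ 2
  set B : EuclideanSpace ℝ ι := WithLp.toLp 2 fun i => b i ^ 2
  rcases (hN.nonneg A).eq_or_lt with hA | hA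
  · have hc : c = 0 := by
      have ha : ∀ i, a i = 0 := fun i => by
        simpa [A] using congrArg (· i) (hN.eq_zero_iff.1 hA.symm)
      ext i
      simpa [ha i] using h i
    simp [hc, hN.map_zero, ← hA]
  refine sq_le_four_mul_of_forall_le_mul_add (hN.nonneg c) hA (hN.nonneg B) fun r hr => ?_
  calc N c ≤ N (r • A + r⁻¹ • B) :=
        habs.mono hN fun i =>
          (h i).trans (by simpa [A, B] using two_mul_le_mul_sq_add_inv_mul_sq hr)
    _ ≤ r * N A + r⁻¹ * N B := by
        simpa only [hN.map_smul_of_nonneg hr.le, hN.map_smul_of_nonneg (inv_pos.2 hr).le]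
          using hN.add_le (r • A) (r⁻¹ • B)

end IsAbsolute

end Absolute

section SignFlip

variable {ι : Type*} [Fintype ι]

-- Sign patterns are elements of the group `ι → ℤˣ`, so sums over them reindex by multiplication.
noncomputable def signFlip (ε : ι → ℤˣ) : EuclideanSpace ℝ ι ≃L[ℝ] EuclideanSpace ℝ ι :=
  LinearEquiv.toContinuousLinearEquiv <| LinearEquiv.ofInvolutive
    { toFun := fun t => WithLp.toLp 2 fun i => ((ε i : ℤ) : ℝ) * t i
      map_add' := fun s t => by ext i; simp [mul_add]
      map_smul' := fun c t => by ext i; simp [mul_left_comm] }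
    fun t => by ext i; simp [← mul_assoc, ← Int.cast_mul, ← Units.val_mul, Int.units_mul_self]

theorem signFlip_apply (ε : ι → ℤˣ) (t : EuclideanSpace ℝ ι) (i : ι) :
    signFlip ε t i = ((ε i : ℤ) : ℝ) * t i := rfl

theorem abs_signFlip_apply (ε : ι → ℤˣ) (t : EuclideanSpace ℝ ι) (i : ι) :
    |signFlip ε t i| = |t i| := by
  rcases Int.units_eq_one_or (ε i) with h | h <;> simp [signFlip_apply, h]

theorem signFlip_signFlip (ε η : ι → ℤˣ) (t : EuclideanSpace ℝ ι) :
    signFlip ε (signFlip η t) = signFlip (ε * η) t := by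
  ext i
  simp [signFlip_apply, mul_assoc]

theorem exists_signFlip_eq_abs (t : EuclideanSpace ℝ ι) :
    ∃ η, signFlip η t = WithLp.toLp 2 fun i => |t i| := by
  refine ⟨fun i => if 0 ≤ t i then 1 else -1, ?_⟩
  ext i
  by_cases h : 0 ≤ t i
  · simp [signFlip_apply, h, abs_of_nonneg h]
  · simp [signFlip_apply, h, abs_of_neg (not_le.1 h)]

theorem IsAbsolute.map_signFlip {N : EuclideanSpace ℝ ι → ℝ} (habs : IsAbsolute N)
    (ε : ι → ℤˣ) (t : EuclideanSpace ℝ ι) : N (signFlip ε t) = N t :=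
  habs.eq_of_abs_eq (abs_signFlip_apply ε t)

variable [DecidableEq ι]

noncomputable def signAverage (N : EuclideanSpace ℝ ι → ℝ) (t : EuclideanSpace ℝ ι) : ℝ :=
  √(∑ ε : ι → ℤˣ, (Fintype.card (ι → ℤˣ) : ℝ)⁻¹ * N (signFlip ε t) ^ 2)

theorem isAbsolute_signAverage (N : EuclideanSpace ℝ ι → ℝ) : IsAbsolute (signAverage N) := by
  intro t
  obtain ⟨η, hη⟩ := exists_signFlip_eq_abs t
  rw [← hη, signAverage, signAverage]
  simp only [signFlip_signFlip]
  congr 1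
  exact (Fintype.sum_equiv (Equiv.mulRight η) _ _ fun _ => rfl).symm

theorem isSmoothNorm_signAverage {κ : ℝ} {N : EuclideanSpace ℝ ι → ℝ} (hN : IsSmoothNorm κ N) :
    IsSmoothNorm κ (signAverage N) :=
  IsSmoothNorm.sqrt_sum_mul_sq (fun ε => hN.comp_continuousLinearEquiv (signFlip ε))
    fun _ => by positivity

theorem IsRegularNorm.exists_isAbsolute {κ ς : ℝ} {θ : EuclideanSpace ℝ ι → ℝ}
    (hθ : IsRegularNorm κ ς θ) (habs : IsAbsolute θ) (hς : 0 < ς) :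
    ∃ M, IsSmoothNorm κ M ∧ IsAbsolute M ∧ ∀ t, ς⁻¹ * M t ≤ θ t ∧ θ t ≤ ς * M t := by
  obtain ⟨N, hN, hNθ⟩ := hθ
  refine ⟨signAverage N, isSmoothNorm_signAverage hN, isAbsolute_signAverage N, fun t => ?_⟩
  have hθ0 : 0 ≤ θ t := (mul_nonneg (inv_pos.2 hς).le (hN.isNorm.nonneg t)).trans (hNθ t).1
  have hw : ∀ ε : ι → ℤˣ, 0 ≤ (Fintype.card (ι → ℤˣ) : ℝ)⁻¹ := fun _ => by positivity
  constructor
  · refine (inv_mul_le_iff₀ hς).2 (sqrt_sum_mul_sq_le hw sum_inv_card_eq_one (by positivity)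
      fun ε => ?_)
    rw [abs_of_nonneg (hN.isNorm.nonneg _), ← habs.map_signFlip ε t]
    exact (inv_mul_le_iff₀ hς).1 (hNθ _).1
  · refine (inv_mul_le_iff₀ hς).1 (le_sqrt_sum_mul_sq hw sum_inv_card_eq_one (by positivity)
      fun ε => ?_)
    rw [← habs.map_signFlip ε t]
    exact (inv_mul_le_iff₀ hς).2 (hNθ _).2

end SignFlip

section Aggregate

variable {ι : Type*} {E : ι → Type*}

def normSqVec (M : ∀ i, E i → ℝ) (x : PiLp 2 E) : EuclideanSpace ℝ ι :=
  WithLp.toLp 2 fun i => M i (x i) ^ 2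

noncomputable def aggregateNorm (ψ : EuclideanSpace ℝ ι → ℝ) (M : ∀ i, E i → ℝ) (x : PiLp 2 E) :
    ℝ :=
  √(ψ (normSqVec M x))

theorem aggregateNorm_sq {ψ : EuclideanSpace ℝ ι → ℝ} (hψ : IsNorm ψ) (M : ∀ i, E i → ℝ)
    (x : PiLp 2 E) : aggregateNorm ψ M x ^ 2 = ψ (normSqVec M x) :=
  Real.sq_sqrt (hψ.nonneg _)

variable [Fintype ι]

theorem isNorm_aggregateNorm [∀ i, AddCommGroup (E i)] [∀ i, Module ℝ (E i)]
    {ψ : EuclideanSpace ℝ ι → ℝ} {M : ∀ i, E i → ℝ} (hψ : IsNorm ψ) (habs : IsAbsolute ψ)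
    (hM : ∀ i, IsNorm (M i)) : IsNorm (aggregateNorm ψ M) := by
  refine ⟨fun x => Real.sqrt_nonneg _, fun x => ?_, fun c x => ?_, fun x y => ?_⟩
  · rw [aggregateNorm, Real.sqrt_eq_zero (hψ.nonneg _), hψ.eq_zero_iff]
    constructor
    · intro h
      ext i
      have hi : M i (x i) ^ 2 = 0 := congrArg (fun v : EuclideanSpace ℝ ι => v i) h
      rw [WithLp.ofLp_zero, Pi.zero_apply, ← (hM i).eq_zero_iff]
      exact pow_eq_zero_iff two_ne_zero |>.1 hi
    · rintro rfl
      ext i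
      change M i ((0 : PiLp 2 E) i) ^ 2 = 0
      rw [WithLp.ofLp_zero, Pi.zero_apply, (hM i).map_zero, zero_pow two_ne_zero]
  · have : normSqVec M (c • x) = c ^ 2 • normSqVec M x := by
      ext i
      simp [normSqVec, (hM i).map_smul, mul_pow]
    rw [aggregateNorm, aggregateNorm, this, hψ.map_smul_of_nonneg (sq_nonneg c),
      Real.sqrt_mul (sq_nonneg c), Real.sqrt_sq_eq_abs]
  · set A := aggregateNorm ψ M x
    set B := aggregateNorm ψ M y
    have hA : 0 ≤ A := Real.sqrt_nonneg _
    have hB : 0 ≤ B := Real.sqrt_nonneg _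
    have hA2 : A ^ 2 = ψ (normSqVec M x) := aggregateNorm_sq hψ M x
    have hB2 : B ^ 2 = ψ (normSqVec M y) := aggregateNorm_sq hψ M y
    let c : EuclideanSpace ℝ ι := WithLp.toLp 2 fun i => 2 * M i (x i) * M i (y i)
    have hc : ψ c ≤ 2 * A * B := by
      refine (pow_le_pow_iff_left₀ (hψ.nonneg c) (by positivity) two_ne_zero).1 ?_
      calc ψ c ^ 2 ≤ 4 * ψ (normSqVec M x) * ψ (normSqVec M y) :=
            habs.sq_le_of_abs_le_two_mul hψ fun i => (abs_of_nonneg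
              (mul_nonneg (mul_nonneg two_pos.le ((hM i).nonneg _)) ((hM i).nonneg _))).le
        _ = (2 * A * B) ^ 2 := by rw [← hA2, ← hB2]; ring
    have hsum : ψ (normSqVec M (x + y)) ≤ ψ (normSqVec M x + c + normSqVec M y) :=
      habs.mono hψ fun i => by
        change |M i ((x + y) i) ^ 2| ≤
          M i (x i) ^ 2 + 2 * M i (x i) * M i (y i) + M i (y i) ^ 2
        rw [WithLp.ofLp_add, Pi.add_apply, abs_sq]
        nlinarith [(hM i).add_le (x i) (y i), (hM i).nonneg (x i + y i)]
    refine (pow_le_pow_iff_left₀ (Real.sqrt_nonneg _) (by positivity) two_ne_zero).1 ?_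
    rw [Real.sq_sqrt (hψ.nonneg _)]
    calc ψ (normSqVec M (x + y)) ≤ ψ (normSqVec M x) + ψ c + ψ (normSqVec M y) :=
          hsum.trans ((hψ.add_le _ _).trans (by linarith [hψ.add_le (normSqVec M x) c]))
      _ ≤ (A + B) ^ 2 := by nlinarith

theorem aggregateNorm_le_mul {θ ψ : EuclideanSpace ℝ ι → ℝ} {N M : ∀ i, E i → ℝ} {a b : ℝ}
    (hθ : IsNorm θ) (habs : IsAbsolute θ) (hN : ∀ i y, 0 ≤ N i y) (ha : 0 ≤ a) (hb : 0 ≤ b)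
    (hθψ : ∀ t, θ t ≤ a * ψ t) (hNM : ∀ i y, N i y ≤ b * M i y) (x : PiLp 2 E) :
    aggregateNorm θ N x ≤ b * √a * aggregateNorm ψ M x := by
  have hmono : θ (normSqVec N x) ≤ θ (b ^ 2 • normSqVec M x) := habs.mono hθ fun i => by
    change |N i (x i) ^ 2| ≤ b ^ 2 * M i (x i) ^ 2
    rw [abs_sq, ← mul_pow]
    exact pow_le_pow_left₀ (hN i _) (hNM i _) 2
  rw [hθ.map_smul_of_nonneg (sq_nonneg b)] at hmono
  calc √(θ (normSqVec N x)) ≤ √(b ^ 2 * (a * ψ (normSqVec M x))) :=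
        Real.sqrt_le_sqrt (hmono.trans (by gcongr; exact hθψ _))
    _ = b * √a * aggregateNorm ψ M x := by
        rw [Real.sqrt_mul (sq_nonneg b), Real.sqrt_mul ha, Real.sqrt_sq hb, mul_assoc]
        rfl

variable [∀ i, NormedAddCommGroup (E i)] [∀ i, InnerProductSpace ℝ (E i)]

theorem contDiff_normSqVec {M : ∀ i, E i → ℝ} (hM : ∀ i, ContDiff ℝ 1 fun z => M i z ^ 2) :
    ContDiff ℝ 1 (normSqVec M) :=
  contDiff_piLp' 2 fun i => (hM i).comp (contDiff_piLp_apply 2)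

theorem fderiv_normSqVec_apply {M : ∀ i, E i → ℝ} (x h : PiLp 2 E) {i : ι}
    (hM : ∀ i, DifferentiableAt ℝ (fun z => M i z ^ 2) (x i)) :
    fderiv ℝ (normSqVec M) x h i = fderiv ℝ (fun z => M i z ^ 2) (x i) (h i) := by
  have hcomp : ∀ i, HasFDerivAt (fun y : PiLp 2 E => M i (y i) ^ 2)
      ((fderiv ℝ (fun z => M i z ^ 2) (x i)).comp (PiLp.proj (𝕜 := ℝ) 2 E i)) x := fun i =>
    HasFDerivAt.comp (g := fun z => M i z ^ 2) x (hM i).hasFDerivAt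
      (PiLp.hasFDerivAt_apply (𝕜 := ℝ) 2 x i)
  have hv : DifferentiableAt ℝ (normSqVec M) x :=
    (differentiableAt_piLp 2).2 fun i => (hcomp i).differentiableAt
  have hi := ((hasFDerivWithinAt_piLp 2).1 hv.hasFDerivAt.hasFDerivWithinAt i).hasFDerivAt
    Filter.univ_mem
  exact DFunLike.congr_fun (hi.unique (hcomp i)) h

theorem IsSmoothNorm.apply_normSqVec_add_le [∀ i, CompleteSpace (E i)] {κb κ' : ℝ}
    {ψ : EuclideanSpace ℝ ι → ℝ} {M : ∀ i, E i → ℝ} (hψ : IsSmoothNorm κb ψ) (habs : IsAbsolute ψ)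
    (hM : ∀ i, IsSmoothNorm κ' (M i)) (hκb : 1 ≤ κb) (hκ' : 1 ≤ κ') {x : PiLp 2 E}
    (hx : normSqVec M x ≠ 0) (h : PiLp 2 E) :
    ψ (normSqVec M (x + h)) ≤ ψ (normSqVec M x) +
      fderiv ℝ ψ (normSqVec M x) (fderiv ℝ (normSqVec M) x h) +
        (2 * κb + κ') * ψ (normSqVec M h) := by
  set u := normSqVec M x
  set ℓ := fderiv ℝ (normSqVec M) x h
  have hℓ : ∀ i, ℓ i = fderiv ℝ (fun z => M i z ^ 2) (x i) (h i) := fun i =>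
    fderiv_normSqVec_apply x h fun i => (hM i).contDiff_sq.differentiable one_ne_zero _
  have hψD := hψ.isNorm.hasFDerivAt_of_sq
    (hψ.contDiff_sq.differentiable one_ne_zero u).hasFDerivAt hx
  have hstep1 : ψ (normSqVec M (x + h)) ≤ ψ (u + ℓ) + κ' * ψ (normSqVec M h) := by
    refine (habs.mono hψ.isNorm (b := u + ℓ + κ' • normSqVec M h) fun i => ?_).trans
      ((hψ.isNorm.add_le _ _).trans_eq (by rw [hψ.isNorm.map_smul_of_nonneg (by linarith)]))
    change |M i ((x + h) i) ^ 2| ≤ M i (x i) ^ 2 + ℓ i + κ' * M i (h i) ^ 2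
    rw [abs_sq, hℓ, WithLp.ofLp_add, Pi.add_apply]
    exact (hM i).sq_add_le _ _
  have hstep2 : ψ (u + ℓ) ^ 2 ≤ ψ u ^ 2 + 2 * ψ u * fderiv ℝ ψ u ℓ + κb * ψ ℓ ^ 2 := by
    have hpos : ψ u ≠ 0 := mt hψ.isNorm.eq_zero_iff.1 hx
    rw [hψD.fderiv, _root_.smul_apply, smul_eq_mul, ← mul_assoc, mul_inv_cancel₀ (by positivity),
      one_mul]
    exact hψ.sq_add_le u ℓ
  have hstep3 : ψ ℓ ^ 2 ≤ 4 * ψ u * ψ (normSqVec M h) :=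
    habs.sq_le_of_abs_le_two_mul hψ.isNorm fun i =>
      (hℓ i).symm ▸ (hM i).isNorm.abs_fderiv_sq_apply_le _ _
  have hstep4 : |fderiv ℝ ψ u ℓ| ≤ ψ ℓ := hψ.isNorm.abs_fderiv_apply_le hψD.differentiableAt ℓ
  have := le_add_add_mul_of_sq_le (hψ.isNorm.nonneg _) (hψ.isNorm.nonneg u)
    (hψ.isNorm.nonneg _) hκb hstep4 hstep3 hstep2
  linarith

theorem isSmoothNorm_aggregateNorm [∀ i, FiniteDimensional ℝ (E i)] {κb κ' : ℝ}
    {ψ : EuclideanSpace ℝ ι → ℝ} {M : ∀ i, E i → ℝ} (hψ : IsSmoothNorm κb ψ) (habs : IsAbsolute ψ)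
    (hM : ∀ i, IsSmoothNorm κ' (M i)) (hκb : 1 ≤ κb) (hκ' : 1 ≤ κ') :
    IsSmoothNorm (2 * κb + κ') (aggregateNorm ψ M) := by
  have hnorm := isNorm_aggregateNorm hψ.isNorm habs fun i => (hM i).isNorm
  have hsq : (fun x => aggregateNorm ψ M x ^ 2) = fun x => ψ (normSqVec M x) :=
    funext (aggregateNorm_sq hψ.isNorm M)
  have hv : ContDiff ℝ 1 (normSqVec M) := contDiff_normSqVec fun i => (hM i).contDiff_sq
  have hv0 : ∀ x, x ≠ 0 → normSqVec M x ≠ 0 := fun x hx h => hx <| hnorm.eq_zero_iff.1 <| by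
    rw [aggregateNorm, h, hψ.isNorm.map_zero, Real.sqrt_zero]
  have hψC : ∀ x, x ≠ 0 → ContDiffAt ℝ 1 ψ (normSqVec M x) := fun x hx =>
    hψ.isNorm.contDiffAt_of_sq hψ.contDiff_sq.contDiffAt (hv0 x hx)
  refine IsSmoothNorm.of_ne_zero hnorm (hnorm.contDiff_sq_of_contDiffOn_compl_zero fun x hx => ?_)
    (by linarith) fun x hx h => ?_
  · rw [hsq]
    exact ((hψC x hx).comp x hv.contDiffAt).contDiffWithinAt
  rw [hsq, aggregateNorm_sq hψ.isNorm, aggregateNorm_sq hψ.isNorm, aggregateNorm_sq hψ.isNorm,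
    fderiv_fun_comp x ((hψC x hx).differentiableAt one_ne_zero) (hv.differentiable one_ne_zero x),
    ContinuousLinearMap.comp_apply]
  exact hψ.apply_normSqVec_add_le habs hM hκb hκ' (hv0 x hx) h

end Aggregate

/-- aggregation of `(κ',ς')`-regular norms by a
`(κ̄,ς̄)`-regular absolute norm `θ` via `θ(‖x₁‖₁²,…,‖x_K‖_K²)^{1/2}` is
`(2κ̄+κ', ς'·√ς̄)`-regular. -/
theorem stmt_11 {K : ℕ} (n : Fin K → ℕ)
    (θ : EuclideanSpace ℝ (Fin K) → ℝ) (hθ : IsNorm θ)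
    (hθabs : ∀ t : EuclideanSpace ℝ (Fin K), θ t = θ (WithLp.toLp 2 (fun i => |t i|)))
    (κb ςb κ' ς' : ℝ) (hκb : 1 ≤ κb) (hςb : 1 ≤ ςb) (hκ' : 1 ≤ κ') (hς' : 1 ≤ ς')
    (hθreg : IsRegularNorm κb ςb θ)
    (Ni : ∀ i, EuclideanSpace ℝ (Fin (n i)) → ℝ) (hNi : ∀ i, IsNorm (Ni i))
    (hNireg : ∀ i, IsRegularNorm κ' ς' (Ni i))
    (Nagg : PiLp 2 (fun i => EuclideanSpace ℝ (Fin (n i))) → ℝ)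
    (hNagg : ∀ x, Nagg x =
      Real.sqrt (θ (WithLp.toLp 2 (fun i => Ni i (x i) ^ 2)))) :
    IsRegularNorm (2 * κb + κ') (ς' * Real.sqrt ςb) Nagg := by
  have hςb0 : 0 < ςb := by linarith
  have hς'0 : 0 < ς' := by linarith
  obtain ⟨ψ, hψ, hψabs, hψθ⟩ := hθreg.exists_isAbsolute hθabs hςb0
  choose M hM hMN using hNireg
  refine ⟨aggregateNorm ψ M, isSmoothNorm_aggregateNorm hψ hψabs hM hκb hκ', fun x => ?_⟩
  rw [hNagg x, inv_mul_le_iff₀ (by positivity)]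
  exact ⟨aggregateNorm_le_mul hψ.isNorm hψabs (fun i => (hM i).isNorm.nonneg) hςb0.le hς'0.le
      (fun t => (inv_mul_le_iff₀ hςb0).1 (hψθ t).1)
      (fun i y => (inv_mul_le_iff₀ hς'0).1 (hMN i y).1) x,
    aggregateNorm_le_mul hθ hθabs (fun i => (hNi i).nonneg) hςb0.le hς'0.le
      (fun t => (hψθ t).2) (fun i y => (hMN i y).2) x⟩
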